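/- Let B be an ordered branching program of length n and width w and H : {0,1}^s → {0,1}^n, and let q assign to every state of B a value in [0,1] such that q_v equals the {0,1}-label of v for every v ∈ V_n and q_v = (q_{B[v,0]} + q_{B[v,1]})/2 for every verified state v ∈ V_i with i < n (q may be arbitrary in [0,1] at unverified states). Then |q_{v_st} − E[B]| ≤ Pr_{x←U_n}[ the path B[v_st, x_{1..0}], B[v_st, x_{1..1}], ..., B[v_st, x_{1..n}] visits an unverified state ]. -/

import Mathlib

open Finset
open scoped Classical

/-- An ordered branching program of length `n` and width `w`: each layer's states
are identified with `Fin w`; `next i v b` is the successor of state `v` in layer `i`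
on bit `b`; states in the last layer are labeled by `label`. -/
structure OBP (n w : ℕ) where
  start : Fin w
  next : ℕ → Fin w → Bool → Fin w
  label : Fin w → Bool

namespace OBP

/-- The state reached from state `v` in layer `i` after reading `k` bits. -/
def walk {n w : ℕ} (B : OBP n w) : (k : ℕ) → (i : ℕ) → Fin w → (Fin k → Bool) → Fin w
  | 0, _, v, _ => v
  | k + 1, i, v, x => walk B k (i + 1) (B.next i v (x 0)) (fun j => x j.succ)

/-- The state in layer `i` reached from the start state on a length-`i` input. -/
def reach {n w : ℕ} (B : OBP n w) {i : ℕ} (x : Fin i → Bool) : Fin w :=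
  B.walk i 0 B.start x

/-- The boolean output of the program on an `n`-bit input. -/
def eval {n w : ℕ} (B : OBP n w) (x : Fin n → Bool) : Bool :=
  B.label (B.reach x)

end OBP

/-- Expectation of a real-valued function under the uniform distribution. -/
noncomputable def Exp {α : Type*} [Fintype α] (f : α → ℝ) : ℝ :=
  (∑ a, f a) / (Fintype.card α : ℝ)

/-- Probability of an event under the uniform distribution. -/
noncomputable def prob {α : Type*} [Fintype α] (p : α → Prop) : ℝ :=
  ((Finset.univ.filter p).card : ℝ) / (Fintype.card α : ℝ)

/-- A boolean viewed as a real number. -/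
def bval (b : Bool) : ℝ := if b then 1 else 0

/-- The first `k` bits of `x` (padded with `false` if `k > n`). -/
def bits {n : ℕ} (x : Fin n → Bool) (k : ℕ) : Fin k → Bool :=
  fun j => if h : (j : ℕ) < n then x ⟨j, h⟩ else false

/-- `p_{v→}`: the probability of acceptance starting from state `v` in layer `i`,
over a uniformly random suffix of length `n - i`. -/
noncomputable def pAcc {n w : ℕ} (B : OBP n w) (i : ℕ) (v : Fin w) : ℝ :=
  prob (fun r : Fin (n - i) → Bool => B.label (B.walk (n - i) i v r) = true)

/-- `H` is an `ε`-hitting set generator for all OBPs of length `n` and width `W`. -/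
noncomputable def IsHSG (n W s : ℕ) (H : (Fin s → Bool) → Fin n → Bool) (ε : ℝ) : Prop :=
  ∀ B' : OBP n W, ε ≤ Exp (fun x : Fin n → Bool => bval (B'.eval x)) →
    ∃ y : Fin s → Bool, B'.eval (H y) = true

/-- States `u` and `u'` in layer `i` are indistinguishable under `H`:
they behave identically on the length-`(n-i)` prefix of every output of `H`. -/
def Indist {n w s : ℕ} (B : OBP n w) (H : (Fin s → Bool) → Fin n → Bool)
    (i : ℕ) (u u' : Fin w) : Prop :=
  ∀ y : Fin s → Bool,
    B.walk (n - i) i u (bits (H y) (n - i)) = B.walk (n - i) i u' (bits (H y) (n - i))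

/-- `v_i(x)`: the state in layer `i` reached from the start
on the length-`i` prefix of `H x`. -/
def vAt {n w s : ℕ} (B : OBP n w) (H : (Fin s → Bool) → Fin n → Bool)
    (i : ℕ) (x : Fin s → Bool) : Fin w :=
  B.reach (bits (H x) i)

/-- A state `v` in layer `i < n` is unverified if one of its successors is not
reached (in layer `i+1`) by any output of `H`. -/
def Unverified {n w s : ℕ} (B : OBP n w) (H : (Fin s → Bool) → Fin n → Bool)
    (i : ℕ) (v : Fin w) : Prop :=
  i < n ∧ ∃ b : Bool, ∀ x' : Fin s → Bool, B.next i v b ≠ vAt B H (i + 1) x'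

/-! Induct on the number `k` of bits still to be read: for a state `v` in layer `i = n - k`,
`|q_v - p_{v→}|` is at most the probability that the walk from `v` on a uniformly random
suffix visits an unverified state. At an unverified `v` that probability is `1`, while `q_v`
and `p_{v→}` both lie in `[0,1]`. At a verified `v`, the value `q_v`, the acceptance
probability and the hitting probability are each the average of the corresponding
quantities at the two successors of `v`, so the bound passes from them to `v` by the
triangle inequality. -/

section Uniform

variable {α : Type*} [Fintype α]

theorem Exp_unique [Unique α] (f : α → ℝ) : Exp f = f default := by
  simp [Exp]

theorem Exp_bool (f : Bool → ℝ) : Exp f = (f false + f true) / 2 := by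
  simp [Exp, add_comm]

theorem Exp_fin_cons {k : ℕ} (f : (Fin (k + 1) → α) → ℝ) :
    Exp f = Exp fun a : α => Exp fun r : Fin k → α => f (Fin.cons a r) := by
  have hcard : Fintype.card (Fin (k + 1) → α) = Fintype.card α * Fintype.card (Fin k → α) := by
    rw [← Fintype.card_prod]; exact Fintype.card_congr (Fin.consEquiv fun _ => α).symm
  have hsum : ∑ x, f x = ∑ a, ∑ r : Fin k → α, f (Fin.cons a r) := by
    rw [← (Fin.consEquiv fun _ => α).sum_comp, Fintype.sum_prod_type]; rfl
  simp only [Exp, hcard, hsum, ← Finset.sum_div, div_div, Nat.cast_mul, mul_comm]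

theorem Exp_nonneg {f : α → ℝ} (hf : ∀ a, 0 ≤ f a) : 0 ≤ Exp f :=
  div_nonneg (Finset.sum_nonneg fun a _ => hf a) (Nat.cast_nonneg _)

theorem Exp_le_one {f : α → ℝ} (hf : ∀ a, f a ≤ 1) : Exp f ≤ 1 := by
  refine div_le_one_of_le₀ ?_ (Nat.cast_nonneg _)
  simpa using Finset.sum_le_sum fun a (_ : a ∈ Finset.univ) => hf a

theorem prob_eq_one [Nonempty α] {p : α → Prop} (hp : ∀ a, p a) : prob p = 1 := by
  simp [prob, hp]

theorem prob_eq_Exp (p : α → Prop) : prob p = Exp fun a => if p a then 1 else 0 := by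
  simp [prob, Exp, Finset.sum_boole]

end Uniform

theorem bval_nonneg (b : Bool) : 0 ≤ bval b := by
  cases b <;> simp [bval]

theorem bval_le_one (b : Bool) : bval b ≤ 1 := by
  cases b <;> simp [bval]

namespace OBP

variable {n w s : ℕ} (B : OBP n w) (H : (Fin s → Bool) → Fin n → Bool)

def HitsUnverified (k i : ℕ) (v : Fin w) (r : Fin k → Bool) : Prop :=
  ∃ j, Unverified B H (i + j) (B.walk j i v (bits r j))

theorem walk_bits_cons {k : ℕ} (j i : ℕ) (v : Fin w) (b : Bool) (r : Fin k → Bool) :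
    B.walk (j + 1) i v (bits (Fin.cons b r : Fin (k + 1) → Bool) (j + 1)) =
      B.walk j (i + 1) (B.next i v b) (bits r j) := by
  simp only [walk]
  congr
  funext t
  simp only [bits, Fin.val_succ, Nat.add_lt_add_iff_right]
  split_ifs with h
  · exact Fin.cons_succ (α := fun _ => Bool) b r ⟨t, h⟩
  · rfl

variable {B H}

theorem hitsUnverified_cons {k i : ℕ} {v : Fin w} {b : Bool} {r : Fin k → Bool} :
    B.HitsUnverified H (k + 1) i v (Fin.cons b r) ↔
      Unverified B H i v ∨ B.HitsUnverified H k (i + 1) (B.next i v b) r := by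
  unfold HitsUnverified
  rw [← Nat.or_exists_add_one]
  simp only [walk_bits_cons, add_zero, Nat.add_right_comm]
  rfl

theorem abs_sub_Exp_label_le_prob_hitsUnverified (q : ℕ → Fin w → ℝ)
    (hq01 : ∀ i : ℕ, i ≤ n → ∀ v : Fin w, q i v ∈ Set.Icc (0 : ℝ) 1)
    (hqn : ∀ v : Fin w, q n v = bval (B.label v))
    (hqver : ∀ i : ℕ, i < n → ∀ v : Fin w, ¬ Unverified B H i v →
      q i v = (q (i + 1) (B.next i v false) + q (i + 1) (B.next i v true)) / 2)
    (k i : ℕ) (v : Fin w) (hik : i + k = n) :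
    |q i v - Exp (fun r : Fin k → Bool => bval (B.label (B.walk k i v r)))| ≤
      prob (B.HitsUnverified H k i v) := by
  induction k generalizing i v with
  | zero =>
    obtain rfl : i = n := hik
    rw [Exp_unique, walk, hqn, sub_self, abs_zero, prob_eq_Exp]
    exact Exp_nonneg fun _ => by split_ifs <;> norm_num
  | succ k ih =>
    have hi : i < n := by omega
    have hExp : Exp (fun r : Fin (k + 1) → Bool => bval (B.label (B.walk (k + 1) i v r))) =
        Exp (fun r => bval (B.label (B.walk k (i + 1) (B.next i v false) r))) / 2 +
          Exp (fun r => bval (B.label (B.walk k (i + 1) (B.next i v true) r))) / 2 := by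
      rw [Exp_fin_cons, Exp_bool, add_div]
      rfl
    by_cases hv : Unverified B H i v
    · rw [prob_eq_one fun r => ⟨0, by simpa [walk] using hv⟩]
      exact abs_sub_le_of_nonneg_of_le (hq01 i hi.le v).1 (hq01 i hi.le v).2
        (Exp_nonneg fun _ => bval_nonneg _) (Exp_le_one fun _ => bval_le_one _)
    · have hprob : prob (B.HitsUnverified H (k + 1) i v) =
          prob (B.HitsUnverified H k (i + 1) (B.next i v false)) / 2 +
            prob (B.HitsUnverified H k (i + 1) (B.next i v true)) / 2 := by
        simp only [prob_eq_Exp, Exp_fin_cons (α := Bool), Exp_bool, hitsUnverified_cons, hv,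
          false_or, add_div]
      have h0 := abs_le.mp (ih (i + 1) (B.next i v false) (by omega))
      have h1 := abs_le.mp (ih (i + 1) (B.next i v true) (by omega))
      rw [hqver i hi v hv, hExp, hprob, abs_le]
      constructor <;> linarith

end OBP

theorem stmt17 {n w s : ℕ} (B : OBP n w)
    (H : (Fin s → Bool) → Fin n → Bool)
    (q : ℕ → Fin w → ℝ)
    (hq01 : ∀ i : ℕ, i ≤ n → ∀ v : Fin w, q i v ∈ Set.Icc (0 : ℝ) 1)
    (hqn : ∀ v : Fin w, q n v = bval (B.label v))
    (hqver : ∀ i : ℕ, i < n → ∀ v : Fin w, ¬ Unverified B H i v →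
      q i v = (q (i + 1) (B.next i v false) + q (i + 1) (B.next i v true)) / 2) :
    |q 0 B.start - Exp (fun x : Fin n → Bool => bval (B.eval x))| ≤
      prob (fun x : Fin n → Bool =>
        ∃ i : ℕ, Unverified B H i (B.reach (bits x i))) := by
  have hits : B.HitsUnverified H n 0 B.start =
      fun x => ∃ i : ℕ, Unverified B H i (B.reach (bits x i)) := by
    ext x
    simp only [OBP.HitsUnverified, zero_add, OBP.reach]
  have h := OBP.abs_sub_Exp_label_le_prob_hitsUnverified q hq01 hqn hqver n 0 B.start (zero_add n)
  rwa [hits] at h
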